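/- Let 1 ≤ k < n and let G be a simple graph of order n whose complement has at least k + 1 bipartite components. Then n − 2 is an eigenvalue of Q(G) with multiplicity at least k, and in particular q_{k+1}(G) = n − 2. -/

import Mathlib

open Matrix SimpleGraph
open scoped Classical

/-- The `k`-th largest eigenvalue (1-indexed, counted with multiplicity) of a real
symmetric (Hermitian) matrix; junk value `0` if `M` is not Hermitian or `k` is out of range. -/
noncomputable def kthEig {V : Type*} [Fintype V] [DecidableEq V]
    (M : Matrix V V ℝ) (k : ℕ) : ℝ :=
  if hM : M.IsHermitian then
    if h : k - 1 < Fintype.card V then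
      letI f : Fin (Fintype.card V) → ℝ := hM.eigenvalues ∘ (Fintype.equivFin V).symm
      (f ∘ Tuple.sort f) (Fin.rev ⟨k - 1, h⟩)
    else 0
  else 0

/-- The signless Laplacian `Q(G) = D(G) + A(G)` of a simple graph `G`. -/
noncomputable def signlessLap {V : Type*} [Fintype V] [DecidableEq V]
    (G : SimpleGraph V) [DecidableRel G.Adj] : Matrix V V ℝ :=
  G.degMatrix ℝ + G.adjMatrix ℝ

/-- `qEig G k` is the `k`-th largest signless Laplacian eigenvalue `q_k(G)`. -/
noncomputable def qEig {V : Type*} [Fintype V] [DecidableEq V]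
    (G : SimpleGraph V) [DecidableRel G.Adj] (k : ℕ) : ℝ :=
  kthEig (signlessLap G) k

/-- `c` is a bipartite connected component of `H`: the vertex set of the component splits
into two disjoint classes `U`, `W` such that every edge of the component joins `U` and `W`. -/
def IsBipartiteComponent {V : Type*} (H : SimpleGraph V) (c : H.ConnectedComponent) : Prop :=
  ∃ U W : Set V, U ∪ W = c.supp ∧ Disjoint U W ∧
    ∀ ⦃u v : V⦄, u ∈ c.supp → H.Adj u v → (u ∈ U ∧ v ∈ W) ∨ (u ∈ W ∧ v ∈ U)

/-- `c` is a balanced bipartite connected component of `H`: bipartite with vertex classes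
of equal size. -/
def IsBalancedBipartiteComponent {V : Type*} (H : SimpleGraph V)
    (c : H.ConnectedComponent) : Prop :=
  ∃ U W : Set V, U ∪ W = c.supp ∧ Disjoint U W ∧ U.ncard = W.ncard ∧
    ∀ ⦃u v : V⦄, u ∈ c.supp → H.Adj u v → (u ∈ U ∧ v ∈ W) ∨ (u ∈ W ∧ v ∈ U)

/-- `G` is the complete multipartite graph whose parts are the fibers of `p`:
two vertices are adjacent iff they lie in different parts. -/
def IsCompleteMultipartiteWith {V ι : Type*} (G : SimpleGraph V) (p : V → ι) : Prop :=
  ∀ u v : V, G.Adj u v ↔ p u ≠ p v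

/-!
Since `Q(G) + Q(Gᶜ) = (n - 2) I + J`, on `ker Q(Gᶜ)` the form `xᵀ Q(G) x` is at least
`(n - 2) ‖x‖²`, on `1^⊥` it is at most `(n - 2) ‖x‖²` (as `Q(Gᶜ)` is positive semidefinite), and on
`ker Q(Gᶜ) ∩ 1^⊥` the matrix `Q(G)` acts as `n - 2`. A bipartite component of `Gᶜ` with classes
`U`, `W` gives the kernel vector `1_U - 1_W` of `Q(Gᶜ)`, and distinct components give disjointly
supported vectors, so `dim ker Q(Gᶜ) ≥ k + 1`. The eigenspace bound follows at once, and the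
min-max principle yields at least `k + 1` eigenvalues `≥ n - 2` and at most one `> n - 2`.
-/

open Finset

lemma sum_mul_sq_pos {ι : Type*} [Fintype ι] {w y : ι → ℝ} (hy : y ≠ 0)
    (hw : ∀ t, y t ≠ 0 → 0 < w t) : 0 < ∑ t, w t * y t ^ 2 := by
  obtain ⟨t₀, ht₀⟩ := Function.ne_iff.mp hy
  refine sum_pos' (fun t _ => ?_) ⟨t₀, mem_univ _, mul_pos (hw t₀ ht₀) (sq_pos_of_ne_zero ht₀)⟩
  by_cases ht : y t = 0
  · simp [ht]
  · have := hw t ht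
    positivity

section LinearAlgebra

variable {F M : Type*} [Field F] [AddCommGroup M] [Module F M] [FiniteDimensional F M]

lemma finrank_le_finrank_ker_add_one (φ : M →ₗ[F] F) :
    Module.finrank F M ≤ Module.finrank F (LinearMap.ker φ) + 1 := by
  have := LinearMap.finrank_range_add_finrank_ker φ
  have := (LinearMap.range φ).finrank_le
  rw [Module.finrank_self] at this
  omega

lemma finrank_le_finrank_inf_ker_add_one (K : Submodule F M) (φ : M →ₗ[F] F) :
    Module.finrank F K ≤ Module.finrank F ↥(K ⊓ LinearMap.ker φ) + 1 := by
  have := Submodule.finrank_sup_add_finrank_inf_eq K (LinearMap.ker φ)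
  have := (K ⊔ LinearMap.ker φ).finrank_le
  have := finrank_le_finrank_ker_add_one φ
  omega

end LinearAlgebra

theorem linearIndependent_of_pairwise_disjoint_support {ι V R : Type*} [Ring R] [NoZeroDivisors R]
    {f : ι → V → R} (hf : ∀ i, f i ≠ 0)
    (hdisj : Pairwise fun i j => Disjoint (Function.support (f i)) (Function.support (f j))) :
    LinearIndependent R f := by
  rw [linearIndependent_iff']
  intro s g hsum i hi
  obtain ⟨v, hv⟩ := Function.ne_iff.mp (hf i)
  have hsum_v := congrFun hsum v
  rw [Finset.sum_apply, Pi.zero_apply, sum_eq_single i (fun j _ hji => ?_) (absurd hi)] at hsum_v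
  · exact (mul_eq_zero.mp hsum_v).resolve_right hv
  · simp [Function.notMem_support.mp (Set.disjoint_right.mp (hdisj hji) hv)]

lemma mem_ker_sum_proj_iff {V : Type*} [Fintype V] {x : V → ℝ} :
    x ∈ LinearMap.ker (∑ t, LinearMap.proj t : (V → ℝ) →ₗ[ℝ] ℝ) ↔ ∑ t, x t = 0 := by
  simp

section Spectral

variable {V : Type*} [Fintype V] [DecidableEq V] {Q : Matrix V V ℝ} (hQ : Q.IsHermitian)

namespace Matrix.IsHermitian

noncomputable def eigenCoords (x : V → ℝ) : V → ℝ :=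
  star (hQ.eigenvectorUnitary : Matrix V V ℝ) *ᵥ x

lemma eigenvectorUnitary_mulVec_eigenCoords (x : V → ℝ) :
    (hQ.eigenvectorUnitary : Matrix V V ℝ) *ᵥ hQ.eigenCoords x = x := by
  rw [eigenCoords, mulVec_mulVec, mem_unitaryGroup_iff.mp hQ.eigenvectorUnitary.2, one_mulVec]

lemma eigenCoords_ne_zero {x : V → ℝ} (hx : x ≠ 0) : hQ.eigenCoords x ≠ 0 := by
  intro h
  apply hx
  rw [← hQ.eigenvectorUnitary_mulVec_eigenCoords x, h, mulVec_zero]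

lemma dotProduct_eigenvectorUnitary_mulVec (x z : V → ℝ) :
    x ⬝ᵥ ((hQ.eigenvectorUnitary : Matrix V V ℝ) *ᵥ z) = hQ.eigenCoords x ⬝ᵥ z := by
  rw [dotProduct_mulVec, ← mulVec_transpose, eigenCoords, star_eq_conjTranspose,
    conjTranspose_eq_transpose_of_trivial]

lemma dotProduct_mulVec_sub_mul_dotProduct_self (x : V → ℝ) (c : ℝ) :
    x ⬝ᵥ (Q *ᵥ x) - c * (x ⬝ᵥ x) = ∑ t, (hQ.eigenvalues t - c) * hQ.eigenCoords x t ^ 2 := by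
  have hQx : Q *ᵥ x = (hQ.eigenvectorUnitary : Matrix V V ℝ) *ᵥ
      (diagonal hQ.eigenvalues *ᵥ hQ.eigenCoords x) := by
    conv_lhs => rw [hQ.spectral_theorem]
    rw [Unitary.conjStarAlgAut_apply, ← mulVec_mulVec, ← mulVec_mulVec]
    rfl
  have hx : x ⬝ᵥ x = hQ.eigenCoords x ⬝ᵥ hQ.eigenCoords x := by
    rw [← dotProduct_eigenvectorUnitary_mulVec, eigenvectorUnitary_mulVec_eigenCoords]
  rw [hx, hQx, dotProduct_eigenvectorUnitary_mulVec, dotProduct, dotProduct, mul_sum,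
    ← sum_sub_distrib]
  refine sum_congr rfl fun t _ => ?_
  rw [mulVec_diagonal]
  ring

lemma exists_mem_ne_zero_eigenCoords_eq_zero (K : Submodule ℝ (V → ℝ)) (S : Finset V)
    (hS : #S < Module.finrank ℝ K) :
    ∃ x ∈ K, x ≠ 0 ∧ ∀ t ∈ S, hQ.eigenCoords x t = 0 := by
  let coordsOn : K →ₗ[ℝ] (S → ℝ) :=
    (LinearMap.pi fun t : S => LinearMap.proj (t : V) ∘ₗ
      (star (hQ.eigenvectorUnitary : Matrix V V ℝ)).mulVecLin).domRestrict K
  obtain ⟨x, hx, hx0⟩ := Submodule.exists_mem_ne_zero_of_ne_bot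
    (LinearMap.ker_ne_bot_of_finrank_lt (f := coordsOn) (by simpa using hS))
  refine ⟨x, x.2, fun h => hx0 (Subtype.ext h), fun t ht => ?_⟩
  simpa [coordsOn, eigenCoords] using congrFun (LinearMap.mem_ker.mp hx) ⟨t, ht⟩

end Matrix.IsHermitian

/- Min-max: if too few eigenvalues are `≥ c`, some nonzero `x ∈ K` is orthogonal to all their
eigenvectors, and then `xᵀ Q x < c ‖x‖²`. -/
theorem finrank_le_card_eigenvalues_ge (K : Submodule ℝ (V → ℝ)) (c : ℝ)
    (hK : ∀ x ∈ K, c * (x ⬝ᵥ x) ≤ x ⬝ᵥ (Q *ᵥ x)) :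
    Module.finrank ℝ K ≤ #{t | c ≤ hQ.eigenvalues t} := by
  by_contra! hlt
  obtain ⟨x, hxK, hx0, hy⟩ := hQ.exists_mem_ne_zero_eigenCoords_eq_zero K _ hlt
  have hpos := sum_mul_sq_pos (w := fun t => c - hQ.eigenvalues t) (hQ.eigenCoords_ne_zero hx0)
    fun t ht => sub_pos.mpr (not_le.mp fun hct => ht (hy t (by simpa using hct)))
  have hform := hQ.dotProduct_mulVec_sub_mul_dotProduct_self x c
  simp only [← neg_sub c, neg_mul, sum_neg_distrib] at hform
  linarith [hK x hxK]

theorem finrank_le_card_eigenvalues_le (K : Submodule ℝ (V → ℝ)) (c : ℝ)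
    (hK : ∀ x ∈ K, x ⬝ᵥ (Q *ᵥ x) ≤ c * (x ⬝ᵥ x)) :
    Module.finrank ℝ K ≤ #{t | hQ.eigenvalues t ≤ c} := by
  by_contra! hlt
  obtain ⟨x, hxK, hx0, hy⟩ := hQ.exists_mem_ne_zero_eigenCoords_eq_zero K _ hlt
  have hpos := sum_mul_sq_pos (w := fun t => hQ.eigenvalues t - c) (hQ.eigenCoords_ne_zero hx0)
    fun t ht => sub_pos.mpr (not_le.mp fun htc => ht (hy t (by simpa using htc)))
  linarith [hK x hxK, hQ.dotProduct_mulVec_sub_mul_dotProduct_self x c]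

end Spectral

lemma card_filter_comp_equiv {α β : Type*} [Fintype α] [Fintype β] (e : α ≃ β) (p : β → Prop)
    [DecidablePred p] : #{a | p (e a)} = #{b | p b} :=
  card_equiv e (by simp)

/- `Tuple.sort` sorts increasingly, so position `Fin.rev ⟨k, _⟩` holds the `(k + 1)`-th largest
value; this is the indexing of `kthEig`. -/
theorem Tuple.sort_rev_eq_of_card {m : ℕ} (f : Fin m → ℝ) {c : ℝ} {k : ℕ} (hk : k < m)
    (hge : k + 1 ≤ #{i | c ≤ f i}) (hgt : #{i | c < f i} ≤ k) :
    f (Tuple.sort f (Fin.rev ⟨k, hk⟩)) = c := by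
  set g := f ∘ Tuple.sort f
  have hg : Monotone g := Tuple.monotone_sort f
  have hcount (p : ℝ → Prop) [DecidablePred p] : #{i | p (g i)} = #{i | p (f i)} :=
    card_filter_comp_equiv (Tuple.sort f) (p ∘ f)
  set i₀ : Fin m := Fin.rev ⟨k, hk⟩
  have hi₀ : (i₀ : ℕ) = m - (k + 1) := Fin.val_rev _
  apply le_antisymm
  · by_contra! hlt
    have : Ici i₀ ⊆ ({i | c < g i} : Finset _) := fun i hi =>
      mem_filter.mpr ⟨mem_univ _, hlt.trans_le (hg (mem_Ici.mp hi))⟩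
    have := card_le_card this
    rw [Fin.card_Ici, hcount (c < ·)] at this
    omega
  · by_contra! hlt
    have : ({i | c ≤ g i} : Finset _) ⊆ Ioi i₀ := fun i hi => mem_Ioi.mpr <| not_le.mp fun hle =>
      (hg hle).not_gt (hlt.trans_le (mem_filter.mp hi).2)
    have := card_le_card this
    rw [Fin.card_Ioi, hcount (c ≤ ·)] at this
    omega

theorem kthEig_succ_eq_of_card {V : Type*} [Fintype V] [DecidableEq V] {M : Matrix V V ℝ}
    (hM : M.IsHermitian) {c : ℝ} {k : ℕ} (hk : k < Fintype.card V)
    (hge : k + 1 ≤ #{i | c ≤ hM.eigenvalues i}) (hgt : #{i | c < hM.eigenvalues i} ≤ k) :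
    kthEig M (k + 1) = c := by
  rw [kthEig, dif_pos hM, dif_pos (by simpa using hk)]
  have hcount (p : ℝ → Prop) [DecidablePred p] :
      #{i | p ((hM.eigenvalues ∘ (Fintype.equivFin V).symm) i)} = #{i | p (hM.eigenvalues i)} :=
    card_filter_comp_equiv (Fintype.equivFin V).symm (p ∘ hM.eigenvalues)
  exact Tuple.sort_rev_eq_of_card _ hk (by rwa [hcount (c ≤ ·)]) (by rwa [hcount (c < ·)])

section SignlessLaplacian

variable {V : Type*} [Fintype V] [DecidableEq V]

lemma isHermitian_signlessLap (H : SimpleGraph V) [DecidableRel H.Adj] :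
    (signlessLap H).IsHermitian :=
  (H.isHermitian_degMatrix ℝ).add (H.isHermitian_adjMatrix ℝ)

lemma signlessLap_mulVec_apply (H : SimpleGraph V) [DecidableRel H.Adj] (x : V → ℝ) (u : V) :
    (signlessLap H *ᵥ x) u = ∑ v ∈ H.neighborFinset u, (x u + x v) := by
  rw [signlessLap, add_mulVec, Pi.add_apply, degMatrix_mulVec_apply, adjMatrix_mulVec_apply,
    sum_add_distrib, sum_const, card_neighborFinset_eq_degree, nsmul_eq_mul]

lemma dotProduct_signlessLap_mulVec (H : SimpleGraph V) [DecidableRel H.Adj] (x : V → ℝ) :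
    x ⬝ᵥ (signlessLap H *ᵥ x) =
      (∑ i, ∑ j, if H.Adj i j then (x i + x j) ^ 2 else 0) / 2 := by
  simp_rw [signlessLap, add_mulVec, dotProduct_add, dotProduct_mulVec_degMatrix,
    dotProduct_mulVec_adjMatrix, ← sum_add_distrib, degree_eq_sum_if_adj, sum_mul, ite_mul,
    one_mul, zero_mul, ← sum_add_distrib, ite_add_ite, add_zero]
  rw [← add_self_div_two (∑ _ : V, ∑ _ : V, _)]
  conv_lhs => enter [1, 2, 2, i, 2, j]; rw [if_congr (adj_comm H i j) rfl rfl]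
  conv_lhs => enter [1, 2]; rw [sum_comm]
  simp_rw [← sum_add_distrib, ite_add_ite]
  congr 2 with i
  congr 2 with j
  ring_nf

lemma dotProduct_signlessLap_mulVec_nonneg (H : SimpleGraph V) [DecidableRel H.Adj]
    (x : V → ℝ) : 0 ≤ x ⬝ᵥ (signlessLap H *ᵥ x) := by
  rw [dotProduct_signlessLap_mulVec]
  positivity

lemma signlessLap_mulVec_eq (G : SimpleGraph V) [DecidableRel G.Adj] (x : V → ℝ) :
    signlessLap G *ᵥ x =
      ((Fintype.card V : ℝ) - 2) • x + (∑ v, x v) • 1 - signlessLap Gᶜ *ᵥ x := by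
  rw [eq_sub_iff_add_eq]
  ext u
  have hu : u ∈ (G.neighborFinset u)ᶜ := by simp
  have hsplit := sum_add_sum_compl (G.neighborFinset u) (fun v => x u + x v)
  rw [← add_sum_erase _ _ hu] at hsplit
  rw [Pi.add_apply, signlessLap_mulVec_apply, signlessLap_mulVec_apply, neighborFinset_compl,
    sdiff_singleton_eq_erase]
  simp only [sum_add_distrib, sum_const, card_univ, nsmul_eq_mul, Pi.add_apply, Pi.smul_apply,
    Pi.one_apply, smul_eq_mul] at hsplit ⊢
  linarith

lemma dotProduct_signlessLap_mulVec_eq (G : SimpleGraph V) [DecidableRel G.Adj] (x : V → ℝ) :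
    x ⬝ᵥ (signlessLap G *ᵥ x) = ((Fintype.card V : ℝ) - 2) * (x ⬝ᵥ x) + (∑ v, x v) ^ 2 -
      x ⬝ᵥ (signlessLap Gᶜ *ᵥ x) := by
  rw [signlessLap_mulVec_eq, dotProduct_sub, dotProduct_add, dotProduct_smul, dotProduct_smul,
    dotProduct_one, smul_eq_mul, smul_eq_mul, sq]

end SignlessLaplacian

section BipartiteComponents

variable {V : Type*} [Fintype V] [DecidableEq V] (H : SimpleGraph V) [DecidableRel H.Adj]

lemma exists_signlessLap_mulVec_eq_zero_of_isBipartiteComponent {c : H.ConnectedComponent}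
    (hc : IsBipartiteComponent H c) :
    ∃ x : V → ℝ, signlessLap H *ᵥ x = 0 ∧ Function.support x ⊆ c.supp ∧ x ≠ 0 := by
  classical
  obtain ⟨U, W, hUW, hUW_disj, hbip⟩ := hc
  set x : V → ℝ := U.indicator 1 - W.indicator 1
  have hxU {u} (hu : u ∈ U) : x u = 1 := by
    simp [x, hu, Set.disjoint_left.mp hUW_disj hu]
  have hxW {u} (hu : u ∈ W) : x u = -1 := by
    simp [x, hu, Set.disjoint_right.mp hUW_disj hu]
  have hsupp : Function.support x ⊆ c.supp := by
    rw [← hUW]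
    intro u hu
    by_contra hu'
    rw [Set.mem_union, not_or] at hu'
    exact hu (by simp [x, hu'.1, hu'.2])
  have hflip {u v} (huv : H.Adj u v) : x u + x v = 0 := by
    by_cases hu : u ∈ c.supp
    · rcases hbip hu huv with ⟨hu, hv⟩ | ⟨hu, hv⟩
      · rw [hxU hu, hxW hv]; ring
      · rw [hxW hu, hxU hv]; ring
    · have hv : v ∉ c.supp := by
        rwa [ConnectedComponent.mem_supp_iff,
          ← ConnectedComponent.connectedComponentMk_eq_of_adj huv, ← ConnectedComponent.mem_supp_iff]
      rw [Function.notMem_support.mp (mt (@hsupp u) hu),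
        Function.notMem_support.mp (mt (@hsupp v) hv), add_zero]
  refine ⟨x, ?_, hsupp, fun hx0 => ?_⟩
  · ext u
    rw [signlessLap_mulVec_apply, Pi.zero_apply]
    exact sum_eq_zero fun v hv => hflip ((H.mem_neighborFinset u v).mp hv)
  · obtain ⟨u, rfl⟩ := c.exists_rep
    have hu : u ∈ U ∪ W := hUW ▸ ConnectedComponent.connectedComponentMk_mem
    rcases hu with hu | hu
    · simpa [hx0] using hxU hu
    · simpa [hx0] using hxW hu

theorem ncard_isBipartiteComponent_le_finrank_ker_signlessLap :
    {c | IsBipartiteComponent H c}.ncard ≤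
      Module.finrank ℝ (LinearMap.ker (signlessLap H).mulVecLin) := by
  choose x hker hsupp hne using fun c : {c | IsBipartiteComponent H c} =>
    exists_signlessLap_mulVec_eq_zero_of_isBipartiteComponent H c.2
  have hli : LinearIndependent ℝ x :=
    linearIndependent_of_pairwise_disjoint_support hne fun c d hcd =>
      (H.pairwise_disjoint_supp_connectedComponent (Subtype.coe_ne_coe.mpr hcd)).mono
        (hsupp c) (hsupp d)
  let xKer (c : {c | IsBipartiteComponent H c}) : LinearMap.ker (signlessLap H).mulVecLin :=
    ⟨x c, hker c⟩
  rw [← Nat.card_coe_set_eq, Nat.card_eq_fintype_card]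
  exact (LinearIndependent.of_comp (LinearMap.ker _).subtype (v := xKer) hli)
    |>.fintype_card_le_finrank

end BipartiteComponents

section SignlessLaplacianSpectrum

variable {V : Type*} [Fintype V] [DecidableEq V] (G : SimpleGraph V) [DecidableRel G.Adj]

theorem card_eigenvalues_signlessLap_gt_le_one :
    #{t | (Fintype.card V : ℝ) - 2 < (isHermitian_signlessLap G).eigenvalues t} ≤ 1 := by
  set sumProj : (V → ℝ) →ₗ[ℝ] ℝ := ∑ t, LinearMap.proj t
  have hle := finrank_le_card_eigenvalues_le (isHermitian_signlessLap G) (LinearMap.ker sumProj)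
    ((Fintype.card V : ℝ) - 2) fun x hx => by
      rw [dotProduct_signlessLap_mulVec_eq, mem_ker_sum_proj_iff.mp hx]
      linarith [dotProduct_signlessLap_mulVec_nonneg Gᶜ x]
  have hker := finrank_le_finrank_ker_add_one sumProj
  have hsplit := card_filter_add_card_filter_not (s := univ)
    fun t => (isHermitian_signlessLap G).eigenvalues t ≤ (Fintype.card V : ℝ) - 2
  simp only [not_le, card_univ, Module.finrank_fintype_fun_eq_card] at hsplit hker
  omega

theorem finrank_ker_signlessLap_compl_le_card_eigenvalues_ge :
    Module.finrank ℝ (LinearMap.ker (signlessLap Gᶜ).mulVecLin) ≤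
      #{t | (Fintype.card V : ℝ) - 2 ≤ (isHermitian_signlessLap G).eigenvalues t} :=
  finrank_le_card_eigenvalues_ge _ _ _ fun x hx => by
    have hx : signlessLap Gᶜ *ᵥ x = 0 := hx
    rw [dotProduct_signlessLap_mulVec_eq, hx, dotProduct_zero]
    nlinarith [sq_nonneg (∑ t, x t)]

theorem finrank_ker_signlessLap_compl_le_finrank_eigenspace_add_one :
    Module.finrank ℝ (LinearMap.ker (signlessLap Gᶜ).mulVecLin) ≤
      Module.finrank ℝ (Module.End.eigenspace (toLin' (signlessLap G))
        ((Fintype.card V : ℝ) - 2)) + 1 := by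
  refine (finrank_le_finrank_inf_ker_add_one _ (∑ t, LinearMap.proj t)).trans
    (Nat.add_le_add_right (Submodule.finrank_mono ?_) 1)
  rintro x ⟨hxK, hxL⟩
  have hxK : signlessLap Gᶜ *ᵥ x = 0 := hxK
  rw [Module.End.mem_eigenspace_iff, toLin'_apply, signlessLap_mulVec_eq,
    mem_ker_sum_proj_iff.mp hxL, hxK, zero_smul, add_zero, sub_zero]

end SignlessLaplacianSpectrum

/-- Let `1 ≤ k < n` and let `G` be a graph of order `n` whose complement has at least
`k + 1` bipartite components. Then `n - 2` is an eigenvalue of `Q(G)` with multiplicity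
at least `k`; in particular `q_{k+1}(G) = n - 2`. -/
theorem multiplicity_of_bipartite_components (n k : ℕ) (hk1 : 1 ≤ k) (hkn : k < n)
    (G : SimpleGraph (Fin n)) [DecidableRel G.Adj]
    (h : k + 1 ≤ {c : Gᶜ.ConnectedComponent | IsBipartiteComponent Gᶜ c}.ncard) :
    Module.End.HasEigenvalue (Matrix.toLin' (signlessLap G)) ((n : ℝ) - 2) ∧
    k ≤ Module.finrank ℝ
        (Module.End.eigenspace (Matrix.toLin' (signlessLap G)) ((n : ℝ) - 2)) ∧
    qEig G (k + 1) = (n : ℝ) - 2 := by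
  have hker := h.trans (ncard_isBipartiteComponent_le_finrank_ker_signlessLap Gᶜ)
  have heig := finrank_ker_signlessLap_compl_le_finrank_eigenspace_add_one G
  have hge := finrank_ker_signlessLap_compl_le_card_eigenvalues_ge G
  have hgt := card_eigenvalues_signlessLap_gt_le_one G
  rw [Fintype.card_fin] at heig hge hgt
  have hmult : k ≤ Module.finrank ℝ
      (Module.End.eigenspace (Matrix.toLin' (signlessLap G)) ((n : ℝ) - 2)) := by omega
  refine ⟨Module.End.hasEigenvalue_iff.mpr fun hbot => ?_, hmult,
    kthEig_succ_eq_of_card _ (by simpa using hkn) (by omega) (by omega)⟩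
  rw [hbot, finrank_bot] at hmult
  omega
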